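/- Let λ₀, λ₁ > 0 and A ≥ 0. Consider maximizing F(x,y) = λ₁·(λ₁+x)/(2λ₁+x) + λ₀·y/(2λ₀+y) over x, y ≥ 0 with x + y = A. Then the maximizer is x* = max(0, (λ₁·A + 2λ₁λ₀(1−√2))/(λ₁ + √2·λ₀)) and y* = A − x*; i.e., F(x*, A−x*) ≥ F(x, A−x) for all x ∈ [0, A]. -/

import Mathlib

private lemma step_mono (a b u v u0 v0 : ℝ) (ha : 0 ≤ a) (hb : 0 ≤ b)
    (hu0 : 0 < u0) (hv : 0 < v) (huu0 : u0 ≤ u) (hvv0 : v ≤ v0)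
    (hsum : u + v = u0 + v0) (hkey : a * v0^2 ≤ b * u0^2) :
    a / u0 + b / v0 ≤ a / u + b / v := by
  have hu : 0 < u := lt_of_lt_of_le hu0 huu0
  have hv0 : 0 < v0 := lt_of_lt_of_le hv hvv0
  have hv0e : v0 = u + v - u0 := by linarith
  subst hv0e
  rw [div_add_div _ _ (ne_of_gt hu0) (ne_of_gt (by linarith : (0:ℝ) < u + v - u0)),
      div_add_div _ _ (ne_of_gt hu) (ne_of_gt hv),
      div_le_div_iff₀ (by positivity) (by positivity)]
  have h1 : a * v * (u + v - u0) ≤ b * u * u0 := by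
    have c1 : a * v * (u + v - u0) ≤ a * (u + v - u0) ^ 2 := by
      nlinarith [mul_nonneg (mul_nonneg ha (by linarith : (0:ℝ) ≤ u + v - u0)) (sub_nonneg.2 hvv0)]
    have c2 : b * u0 ^ 2 ≤ b * u * u0 := by
      nlinarith [mul_nonneg (mul_nonneg hb hu0.le) (sub_nonneg.2 huu0)]
    linarith
  nlinarith [mul_nonneg (sub_nonneg.2 huu0) (sub_nonneg.2 h1)]

private lemma cs_ineq (l0 l1 s U V : ℝ) (hs2 : s ^ 2 = 2) (hU : 0 < U) (hV : 0 < V) :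
    (l1 + s * l0) ^ 2 / (U + V) ≤ l1 ^ 2 / U + 2 * l0 ^ 2 / V := by
  rw [div_add_div _ _ hU.ne' hV.ne', div_le_div_iff₀ (by linarith) (by positivity)]
  have hz : (s ^ 2 - 2) * (l0 ^ 2 * (U * V)) = 0 := by rw [hs2]; ring
  nlinarith [sq_nonneg (l1 * V - s * l0 * U), hz]

/-- the maximizer of `F(x, A−x) = λ₁(λ₁+x)/(2λ₁+x) + λ₀(A−x)/(2λ₀+A−x)`
over `x ∈ [0,A]` is `x* = max(0, (λ₁A + 2λ₁λ₀(1−√2))/(λ₁ + √2λ₀))`. -/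
theorem optimal_split (l0 l1 A xs : ℝ) (hl0 : 0 < l0) (hl1 : 0 < l1) (hA : 0 ≤ A)
    (hxs : xs = max 0 ((l1 * A + 2 * l1 * l0 * (1 - Real.sqrt 2)) / (l1 + Real.sqrt 2 * l0))) :
    ∀ x ∈ Set.Icc (0:ℝ) A,
      l1 * (l1 + x) / (2 * l1 + x) + l0 * (A - x) / (2 * l0 + (A - x))
        ≤ l1 * (l1 + xs) / (2 * l1 + xs) + l0 * (A - xs) / (2 * l0 + (A - xs)) := by
  intro x hx
  obtain ⟨hx0, hxA⟩ := hx
  set s := Real.sqrt 2 with hsdef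
  have hs2 : s ^ 2 = 2 := Real.sq_sqrt (by norm_num)
  have hs0 : 0 < s := Real.sqrt_pos.mpr (by norm_num)
  have hd : 0 < l1 + s * l0 := by positivity
  have hu : 0 < 2 * l1 + x := by linarith
  have hv : 0 < 2 * l0 + (A - x) := by linarith
  have id1 : l1 * (l1 + x) / (2 * l1 + x) + l0 * (A - x) / (2 * l0 + (A - x))
      = l1 + l0 - (l1 ^ 2 / (2 * l1 + x) + 2 * l0 ^ 2 / (2 * l0 + (A - x))) := by
    field_simp
    ring
  rcases le_or_gt (l1 * A + 2 * l1 * l0 * (1 - s)) 0 with hneg | hpos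
  · -- boundary case: xs = 0
    have hxs0 : xs = 0 := by
      rw [hxs]
      exact max_eq_left (div_nonpos_of_nonpos_of_nonneg hneg hd.le)
    have hkeylin : A + 2 * l0 ≤ 2 * s * l0 := by nlinarith
    have hkey : l1 ^ 2 * (2 * l0 + A) ^ 2 ≤ 2 * l0 ^ 2 * (2 * l1) ^ 2 := by
      have h1 : (2 * l0 + A) ^ 2 ≤ (2 * s * l0) ^ 2 := by
        have h0 : 0 ≤ 2 * l0 + A := by linarith
        nlinarith
      have h2 : (2 * s * l0) ^ 2 = 8 * l0 ^ 2 := by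
        have : (2 * s * l0) ^ 2 = 4 * s ^ 2 * l0 ^ 2 := by ring
        rw [this, hs2]; ring
      nlinarith [sq_nonneg l1]
    have hstep := step_mono (l1 ^ 2) (2 * l0 ^ 2) (2 * l1 + x) (2 * l0 + (A - x))
      (2 * l1) (2 * l0 + A) (by positivity) (by positivity) (by linarith) hv
      (by linarith) (by linarith) (by ring) hkey
    rw [hxs0, id1]
    have id0 : l1 * (l1 + 0) / (2 * l1 + 0) + l0 * (A - 0) / (2 * l0 + (A - 0))
        = l1 + l0 - (l1 ^ 2 / (2 * l1) + 2 * l0 ^ 2 / (2 * l0 + A)) := by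
      have h0A : 2 * l0 + A ≠ 0 := by positivity
      have h2l : 2 * l1 ≠ 0 := by positivity
      simp only [add_zero, sub_zero]
      rw [div_add_div _ _ h2l h0A, div_add_div _ _ h2l h0A, eq_sub_iff_add_eq,
        ← add_div, div_eq_iff (mul_ne_zero h2l h0A)]
      ring
    rw [id0]
    linarith
  · -- interior case
    have hxs' : xs = (l1 * A + 2 * l1 * l0 * (1 - s)) / (l1 + s * l0) := by
      rw [hxs]
      exact max_eq_right (le_of_lt (div_pos hpos hd))
    set S : ℝ := 2 * l1 + 2 * l0 + A with hSdef
    have hS : 0 < S := by positivity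
    have h1 : 2 * l1 + xs = l1 * S / (l1 + s * l0) := by
      rw [hxs']; field_simp; ring
    have h2 : 2 * l0 + (A - xs) = s * l0 * S / (l1 + s * l0) := by
      rw [hxs']; field_simp; ring
    have huxs : 0 < 2 * l1 + xs := by rw [h1]; positivity
    have hvxs : 0 < 2 * l0 + (A - xs) := by rw [h2]; positivity
    have idxs : l1 * (l1 + xs) / (2 * l1 + xs) + l0 * (A - xs) / (2 * l0 + (A - xs))
        = l1 + l0 - (l1 ^ 2 / (2 * l1 + xs) + 2 * l0 ^ 2 / (2 * l0 + (A - xs))) := by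
      have hune := huxs.ne'
      have hvne := hvxs.ne'
      rw [div_add_div _ _ hune hvne, div_add_div _ _ hune hvne, eq_sub_iff_add_eq,
        ← add_div, div_eq_iff (mul_ne_zero hune hvne)]
      ring
    have e1 : l1 ^ 2 / (2 * l1 + xs) = l1 * (l1 + s * l0) / S := by
      rw [h1]
      rw [div_div_eq_mul_div, div_eq_div_iff (by positivity) hS.ne']
      ring
    have e2 : 2 * l0 ^ 2 / (2 * l0 + (A - xs)) = s * l0 * (l1 + s * l0) / S := by
      rw [h2]
      rw [div_div_eq_mul_div, div_eq_div_iff (by positivity) hS.ne']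
      linear_combination (-(l0 ^ 2 * (l1 + s * l0) * S)) * hs2
    have esum : l1 * (l1 + s * l0) / S + s * l0 * (l1 + s * l0) / S
        = (l1 + s * l0) ^ 2 / S := by ring
    have hb : (l1 + s * l0) ^ 2 / S ≤ l1 ^ 2 / (2 * l1 + x) + 2 * l0 ^ 2 / (2 * l0 + (A - x)) := by
      have huv : S = (2 * l1 + x) + (2 * l0 + (A - x)) := by rw [hSdef]; ring
      rw [huv]
      exact cs_ineq l0 l1 s (2 * l1 + x) (2 * l0 + (A - x)) hs2 hu hv
    rw [id1, idxs, e1, e2]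
    linarith
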